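/- For all integers n, m ≥ 0, every integer k with 0 ≤ k ≤ n+m, and all nonzero real numbers a₁, a₂, the linearization coefficient is given by the explicit double-sum formula β_k^{(n,m)}(a₁,a₂) = (a₁^{k−m} a₂^{k−n} (1/2)_k)/(4^{m+n−k} (m+n−k)! (1/2)_n (1/2)_m) · Σ_{i=0}^{m+n−k} a₁^{m+n−k−i} · C(m+n−k, i) · (n+1−i)_{2i} · Σ_{j=0}^{m+n−k−i} (−1)^j · C(m+n−k−i, j) · (−n+k+j+i+1)_{2(m+n−k−i−j)} · (k+2−j)_{2j} · a₂^{j+i}, where C(p, q) denotes the binomial coefficient. -/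

import Mathlib

open Finset

/-- The Bessel polynomial `q_n(u) = ∑_{k=0}^n (n!(2n−k)! 2^k)/((2n)!(n−k)! k!) u^k`. -/
noncomputable def besselQ (n : ℕ) (u : ℝ) : ℝ :=
  ∑ k ∈ Finset.range (n + 1),
    ((n.factorial : ℝ) * (2 * n - k).factorial * 2 ^ k) /
      ((2 * n).factorial * (n - k).factorial * k.factorial) * u ^ k

/-- The Pochhammer symbol `(z)_k = z(z+1)⋯(z+k−1)` for a real `z`. -/
def poch (z : ℝ) (k : ℕ) : ℝ := ∏ i ∈ Finset.range k, (z + (i : ℝ))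


/-!
Expanding both factors in monomials, with `c_{n,p} = besselCoeff n p`, gives
`q_n(a₁u) q_m(a₂u) = ∑_{p ≤ n, q ≤ m} c_{n,p} c_{m,q} a₁^p a₂^q u^{p+q}`, so it suffices to
expand each power `u^N` in the basis `q_i`. The coefficients `besselPowCoeff N i` of that
expansion are explicit; that they invert the triangular matrix `c_{i,t}` of the `q_i` reduces,
after cancelling factorials, to the vanishing of the `d`-th finite difference of the polynomial
`r ↦ (t + 2r)(t + 2r - 1)⋯(t + 2r - d + 2)` of degree `d - 1`. Coefficients in the basis `q_i`
are unique because it is triangular, and the substitution `p = n - i`, `q = k + i + j - n` turns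
the resulting sum over `(p, q)` into the double sum over `(i, j)`; the remaining terms of the
double sum vanish because one of their Pochhammer factors runs through zero.
-/

open Polynomial
open scoped Nat

lemma poch_eq_eval_ascPochhammer (z : ℝ) (k : ℕ) : poch z k = (ascPochhammer ℝ k).eval z := by
  induction k with
  | zero => simp [poch]
  | succ k ih => rw [poch, prod_range_succ, ← poch, ih, ascPochhammer_succ_eval]

lemma poch_natCast_add_one_sub (a k : ℕ) : poch ((a : ℝ) + 1 - k) k = a.descFactorial k := by
  rw [poch_eq_eval_ascPochhammer, ← descPochhammer_eval_eq_descFactorial,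
    descPochhammer_eval_eq_ascPochhammer]
  ring_nf

lemma poch_natCast_add_one (a k : ℕ) : poch ((a : ℝ) + 1) k = (a + k)! / a ! := by
  rw [poch_eq_eval_ascPochhammer, ← Nat.factorial_mul_ascFactorial, Nat.cast_mul,
    mul_div_cancel_left₀ _ (by positivity), Nat.cast_ascFactorial]
  push_cast
  rfl

lemma poch_half (k : ℕ) : poch (1 / 2) k = (2 * k)! / (4 ^ k * k !) := by
  induction k with
  | zero => simp [poch]
  | succ k ih =>
    rw [poch, prod_range_succ, ← poch, ih, show 2 * (k + 1) = 2 * k + 1 + 1 by ring,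
      Nat.factorial_succ, Nat.factorial_succ, Nat.factorial_succ]
    push_cast
    field_simp
    ring

lemma poch_eq_zero_of_add_eq_zero {z : ℝ} {k s : ℕ} (hs : s < k) (hz : z + s = 0) :
    poch z k = 0 :=
  prod_eq_zero (mem_range.2 hs) hz

lemma factorial_mul_descFactorial_comm {a b k l : ℕ} (h : a + k = b + l) :
    a ! * b.descFactorial k = b ! * a.descFactorial l := by
  rcases le_or_gt k b with hk | hk
  · have hl : l ≤ a := by omega
    have hc : b - k = a - l := by omega
    apply Nat.eq_of_mul_eq_mul_left (Nat.factorial_pos (b - k))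
    rw [mul_left_comm, Nat.factorial_mul_descFactorial hk, hc, mul_left_comm,
      Nat.factorial_mul_descFactorial hl, mul_comm]
  · rw [Nat.descFactorial_eq_zero_iff_lt.2 hk, Nat.descFactorial_eq_zero_iff_lt.2 (by omega),
      mul_zero, mul_zero]

lemma sum_neg_one_pow_mul_choose_mul_descFactorial (t d : ℕ) (hd : 1 ≤ d) :
    ∑ r ∈ range (d + 1),
      (-1 : ℝ) ^ (d - r) * d.choose r * ((t + 2 * r).descFactorial (d - 1) : ℝ) = 0 := by
  set P : ℝ[X] := (descPochhammer ℝ (d - 1)).comp (C 2 * X + C (t : ℝ))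
  have hP : P.natDegree < d := by
    rw [natDegree_comp, descPochhammer_natDegree, natDegree_linear two_ne_zero]
    omega
  have hΔ := congrFun (Polynomial.fwdDiff_iter_eq_zero_of_degree_lt hP) 0
  rw [fwdDiff_iter_eq_sum_shift, Pi.zero_apply] at hΔ
  rw [← hΔ]
  refine sum_congr rfl fun r _ => ?_
  simp only [P, eval_comp, eval_add, eval_mul, eval_C, eval_X, zero_add, nsmul_eq_mul, mul_one,
    zsmul_eq_mul, Int.cast_mul, Int.cast_pow, Int.cast_neg, Int.cast_one, Int.cast_natCast]
  rw [← descPochhammer_eval_eq_descFactorial]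
  push_cast
  ring_nf

noncomputable def besselCoeff (n k : ℕ) : ℝ :=
  ((n.factorial : ℝ) * (2 * n - k).factorial * 2 ^ k) /
    ((2 * n).factorial * (n - k).factorial * k.factorial)

lemma besselQ_eq_sum (n : ℕ) (u : ℝ) :
    besselQ n u = ∑ k ∈ range (n + 1), besselCoeff n k * u ^ k := rfl

lemma besselCoeff_self_ne_zero (n : ℕ) : besselCoeff n n ≠ 0 := by
  unfold besselCoeff
  positivity

noncomputable def besselPowCoeff (N i : ℕ) : ℝ :=
  if i ≤ N then
    (-1) ^ (N - i) * (2 * i)! * poch ((i : ℝ) + 2 - ((N - i : ℕ) : ℝ)) (2 * (N - i)) /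
      (i ! * (N - i)! * 2 ^ N)
  else 0

lemma besselCoeff_mul_besselPowCoeff_self (N : ℕ) :
    besselCoeff N N * besselPowCoeff N N = 1 := by
  simp only [besselCoeff, besselPowCoeff, le_refl, if_true, Nat.sub_self, two_mul,
    Nat.add_sub_cancel, mul_zero, pow_zero, Nat.factorial_zero, Nat.cast_one, poch, range_zero,
    prod_empty]
  field_simp

lemma besselCoeff_mul_besselPowCoeff (t d r : ℕ) (hd : 1 ≤ d) (hr : r ≤ d) :
    besselCoeff (t + r) t * besselPowCoeff (t + d) (t + r) =
      (t + d + 1)! / (t ! * d ! * 2 ^ d) *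
        ((-1) ^ (d - r) * d.choose r * (t + 2 * r).descFactorial (d - 1)) := by
  rw [besselCoeff, besselPowCoeff, if_pos (by omega), show t + d - (t + r) = d - r by omega,
    show 2 * (t + r) - t = t + 2 * r by omega, show t + r - t = r by omega,
    show ((t + r : ℕ) : ℝ) + 2 - ((d - r : ℕ) : ℝ) =
      ((t + d + 1 : ℕ) : ℝ) + 1 - ((2 * (d - r) : ℕ) : ℝ) by push_cast [hr]; ring,
    poch_natCast_add_one_sub, Nat.cast_choose ℝ hr, pow_add]
  have key : ((t + 2 * r)! * (t + d + 1).descFactorial (2 * (d - r)) : ℝ) =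
      (t + d + 1)! * (t + 2 * r).descFactorial (d - 1) := by
    exact_mod_cast factorial_mul_descFactorial_comm (by omega)
  field_simp
  linear_combination key

lemma sum_besselCoeff_mul_besselPowCoeff {t N : ℕ} (ht : t ≤ N) :
    ∑ i ∈ Icc t N, besselCoeff i t * besselPowCoeff N i = if t = N then 1 else 0 := by
  rcases ht.eq_or_lt with rfl | hlt
  · rw [Icc_self, sum_singleton, besselCoeff_mul_besselPowCoeff_self, if_pos rfl]
  obtain ⟨d, rfl⟩ := Nat.exists_eq_add_of_le ht
  rw [if_neg (by omega), ← Ico_add_one_right_eq_Icc, sum_Ico_eq_sum_range,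
    show t + d + 1 - t = d + 1 by omega,
    sum_congr rfl fun r hr => besselCoeff_mul_besselPowCoeff t d r (by omega)
      (Nat.lt_succ_iff.1 (mem_range.1 hr)),
    ← mul_sum, sum_neg_one_pow_mul_choose_mul_descFactorial t d (by omega), mul_zero]

lemma pow_eq_sum_besselPowCoeff_mul_besselQ (N : ℕ) (u : ℝ) :
    u ^ N = ∑ i ∈ range (N + 1), besselPowCoeff N i * besselQ i u := by
  calc u ^ N
      = ∑ t ∈ range (N + 1), (∑ i ∈ Icc t N, besselCoeff i t * besselPowCoeff N i) * u ^ t := by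
        rw [sum_congr rfl fun t ht => by
          rw [sum_besselCoeff_mul_besselPowCoeff (Nat.lt_succ_iff.1 (mem_range.1 ht))]]
        simp
    _ = ∑ t ∈ range (N + 1), ∑ i ∈ Icc t N,
          besselPowCoeff N i * (besselCoeff i t * u ^ t) := by
        simp_rw [sum_mul]
        exact sum_congr rfl fun _ _ => sum_congr rfl fun _ _ => by ring
    _ = ∑ i ∈ range (N + 1), besselPowCoeff N i * besselQ i u := by
        simp_rw [besselQ_eq_sum, mul_sum]
        refine sum_comm' fun t i => ?_
        simp only [mem_range, mem_Icc]
        omega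

lemma pow_eq_sum_besselPowCoeff_mul_besselQ_of_le {N M : ℕ} (h : N ≤ M) (u : ℝ) :
    u ^ N = ∑ i ∈ range (M + 1), besselPowCoeff N i * besselQ i u := by
  rw [pow_eq_sum_besselPowCoeff_mul_besselQ]
  refine sum_subset (range_subset_range.2 (by omega)) fun i _ hi => ?_
  rw [besselPowCoeff, if_neg (by simpa using hi), zero_mul]

noncomputable def besselLinCoeff (n m : ℕ) (a1 a2 : ℝ) (k : ℕ) : ℝ :=
  ∑ p ∈ range (n + 1), ∑ q ∈ range (m + 1),
    besselCoeff n p * besselCoeff m q * a1 ^ p * a2 ^ q * besselPowCoeff (p + q) k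

lemma besselQ_mul_besselQ_eq_sum (n m : ℕ) (a1 a2 u : ℝ) :
    besselQ n (a1 * u) * besselQ m (a2 * u) =
      ∑ k ∈ range (n + m + 1), besselLinCoeff n m a1 a2 k * besselQ k u := by
  simp_rw [besselQ_eq_sum n, besselQ_eq_sum m, sum_mul_sum, besselLinCoeff, sum_mul]
  symm
  rw [sum_comm]
  refine sum_congr rfl fun p hp => ?_
  rw [sum_comm]
  refine sum_congr rfl fun q hq => ?_
  have hpq : p + q ≤ n + m := by simp only [mem_range] at hp hq; omega
  calc _ = besselCoeff n p * besselCoeff m q * a1 ^ p * a2 ^ q *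
        ∑ k ∈ range (n + m + 1), besselPowCoeff (p + q) k * besselQ k u := by
        rw [mul_sum]
        exact sum_congr rfl fun _ _ => by ring
    _ = _ := by
        rw [← pow_eq_sum_besselPowCoeff_mul_besselQ_of_le hpq]
        ring

lemma eq_zero_of_sum_mul_besselQ_eq_zero {N : ℕ} {D : ℕ → ℝ}
    (h : ∀ u, ∑ i ∈ range N, D i * besselQ i u = 0) {k : ℕ} (hk : k < N) : D k = 0 := by
  induction N with
  | zero => exact absurd hk (Nat.not_lt_zero k)
  | succ N ih =>
    have hDN : D N = 0 := by
      set P : ℝ[X] := ∑ i ∈ range (N + 1),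
        C (D i) * ∑ t ∈ range (i + 1), C (besselCoeff i t) * X ^ t
      have hP : P = 0 := Polynomial.funext fun u => by
        simpa [P, eval_finsetSum, besselQ_eq_sum] using h u
      have hcoeff : P.coeff N = D N * besselCoeff N N := by
        simp only [P, finsetSum_coeff, coeff_C_mul, coeff_X_pow, mul_ite, mul_one, mul_zero,
          sum_ite_eq, mem_range]
        rw [sum_range_succ, sum_eq_zero fun i hi => if_neg (by simp only [mem_range] at hi; omega),
          if_pos N.lt_succ_self, zero_add]
      simpa [hP, besselCoeff_self_ne_zero] using hcoeff
    rcases (Nat.lt_succ_iff.1 hk).lt_or_eq with hk | rfl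
    · exact ih (fun u => by simpa [sum_range_succ, hDN] using h u) hk
    · exact hDN

noncomputable def besselLinTerm (n m : ℕ) (a1 a2 : ℝ) (k i j : ℕ) : ℝ :=
  a1 ^ ((k : ℤ) - (m : ℤ)) * a2 ^ ((k : ℤ) - (n : ℤ)) * poch (1 / 2) k /
      (4 ^ (m + n - k) * ((m + n - k).factorial : ℝ) * poch (1 / 2) n * poch (1 / 2) m) *
    (a1 ^ (m + n - k - i) * ((m + n - k).choose i : ℝ) * poch ((n : ℝ) + 1 - (i : ℝ)) (2 * i) *
      ((-1 : ℝ) ^ j * ((m + n - k - i).choose j : ℝ) *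
        poch (-(n : ℝ) + (k : ℝ) + (j : ℝ) + (i : ℝ) + 1) (2 * (m + n - k - i - j)) *
        poch ((k : ℝ) + 2 - (j : ℝ)) (2 * j) * a2 ^ (j + i)))

lemma besselLinTerm_eq_zero_of_lt_left {n m k i j : ℕ} (a1 a2 : ℝ) (h : n < i) :
    besselLinTerm n m a1 a2 k i j = 0 := by
  have hz : poch ((n : ℝ) + 1 - (i : ℝ)) (2 * i) = 0 :=
    poch_eq_zero_of_add_eq_zero (s := i - (n + 1)) (by omega) (by
      rw [Nat.cast_sub (by omega)]; push_cast; ring)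
  simp [besselLinTerm, hz]

lemma besselLinTerm_eq_zero_of_lt_right {n m k i j : ℕ} (a1 a2 : ℝ) (h : k + i + j < n) :
    besselLinTerm n m a1 a2 k i j = 0 := by
  have hz : poch (-(n : ℝ) + (k : ℝ) + (j : ℝ) + (i : ℝ) + 1) (2 * (m + n - k - i - j)) = 0 :=
    poch_eq_zero_of_add_eq_zero (s := n - (k + i + j + 1)) (by omega) (by
      rw [Nat.cast_sub (by omega)]; push_cast; ring)
  simp [besselLinTerm, hz]

lemma besselLinTerm_eq {n m k p q : ℕ} (hp : p ≤ n) (hq : q ≤ m) (hk : k ≤ p + q)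
    {a1 a2 : ℝ} (ha1 : a1 ≠ 0) (ha2 : a2 ≠ 0) :
    besselLinTerm n m a1 a2 k (n - p) (p + q - k) =
      besselCoeff n p * besselCoeff m q * a1 ^ p * a2 ^ q * besselPowCoeff (p + q) k := by
  have hmn : m + n - k - (n - p) = m + p - k := by omega
  have hmp : m + p - k - (p + q - k) = m - q := by omega
  rw [besselLinTerm, besselPowCoeff, if_pos hk, besselCoeff, besselCoeff, hmn, hmp,
    show (k : ℤ) - m = p - ((m + p - k : ℕ) : ℤ) by omega,
    show (k : ℤ) - n = q - ((p + q - k + (n - p) : ℕ) : ℤ) by omega,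
    zpow_sub₀ ha1, zpow_sub₀ ha2, zpow_natCast, zpow_natCast, zpow_natCast, zpow_natCast,
    show (n : ℝ) + 1 - ((n - p : ℕ) : ℝ) = p + 1 by push_cast [hp]; ring,
    show -(n : ℝ) + k + ((p + q - k : ℕ) : ℝ) + ((n - p : ℕ) : ℝ) + 1 = q + 1 by
      push_cast [hp, hk]; ring,
    poch_natCast_add_one, poch_natCast_add_one, poch_half, poch_half, poch_half,
    show p + 2 * (n - p) = 2 * n - p by omega, show q + 2 * (m - q) = 2 * m - q by omega,
    Nat.cast_choose ℝ (show n - p ≤ m + n - k by omega),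
    Nat.cast_choose ℝ (show p + q - k ≤ m + p - k by omega), hmn, hmp,
    show (4 : ℝ) ^ (m + n - k) = 4 ^ (m + n) / 4 ^ k by
      rw [eq_div_iff (by positivity), ← pow_add, Nat.sub_add_cancel (by omega)]]
  field_simp
  ring

lemma besselLinCoeff_eq_sum_besselLinTerm {n m k : ℕ} (hk : k ≤ n + m) {a1 a2 : ℝ}
    (ha1 : a1 ≠ 0) (ha2 : a2 ≠ 0) :
    besselLinCoeff n m a1 a2 k = ∑ i ∈ range (m + n - k + 1), ∑ j ∈ range (m + n - k - i + 1),
      besselLinTerm n m a1 a2 k i j := by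
  rw [besselLinCoeff, ← sum_product', sum_sigma']
  have hk_le : ∀ p q, besselCoeff n p * besselCoeff m q * a1 ^ p * a2 ^ q *
      besselPowCoeff (p + q) k ≠ 0 → k ≤ p + q := fun p q h => by
    by_contra hlt
    simp [besselPowCoeff, hlt] at h
  refine sum_bij_ne_zero (fun pq _ _ => ⟨n - pq.1, pq.1 + pq.2 - k⟩) ?_ ?_ ?_ ?_
  · rintro ⟨p, q⟩ hpq hF
    have hk₁ := hk_le p q hF
    simp only [mem_product, mem_range, mem_sigma] at hpq ⊢
    omega
  · rintro ⟨p, q⟩ hpq hF ⟨p', q'⟩ hpq' hF' heq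
    have hk₁ := hk_le p q hF
    have hk₂ := hk_le p' q' hF'
    simp only [mem_product, mem_range, Sigma.mk.injEq, heq_eq_eq] at hpq hpq' heq
    ext <;> simp only <;> omega
  · rintro ⟨i, j⟩ hij hT
    dsimp only at hT
    have hin : i ≤ n := by
      by_contra h
      exact hT (besselLinTerm_eq_zero_of_lt_left a1 a2 (by omega))
    have hni : n ≤ k + i + j := by
      by_contra h
      exact hT (besselLinTerm_eq_zero_of_lt_right a1 a2 (by omega))
    simp only [mem_sigma, mem_range] at hij
    refine ⟨(n - i, k + i + j - n), by simp only [mem_product, mem_range]; omega, ?_, ?_⟩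
    · rw [← besselLinTerm_eq (by omega) (by omega) (by omega) ha1 ha2]
      convert hT using 2 <;> omega
    · simp only [Sigma.mk.injEq, heq_eq_eq]; omega
  · rintro ⟨p, q⟩ hpq hF
    simp only [mem_product, mem_range] at hpq
    exact (besselLinTerm_eq (by omega) (by omega) (hk_le p q hF) ha1 ha2).symm

/-- Explicit double-sum formula for the linearization coefficients
`β_k^{(n,m)}(a₁,a₂)` of `q_n(a₁u) q_m(a₂u) = ∑_{k=0}^{n+m} β_k^{(n,m)}(a₁,a₂) q_k(u)`. -/
theorem linearization_doubleSum_formula (n m k : ℕ) (hk : k ≤ n + m)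
    (a1 a2 : ℝ) (ha1 : a1 ≠ 0) (ha2 : a2 ≠ 0) (β : ℕ → ℝ)
    (hβ : ∀ u : ℝ, besselQ n (a1 * u) * besselQ m (a2 * u) =
      ∑ i ∈ Finset.range (n + m + 1), β i * besselQ i u) :
    β k =
      a1 ^ ((k : ℤ) - (m : ℤ)) * a2 ^ ((k : ℤ) - (n : ℤ)) * poch (1 / 2) k /
        (4 ^ (m + n - k) * ((m + n - k).factorial : ℝ) * poch (1 / 2) n * poch (1 / 2) m) *
      ∑ i ∈ Finset.range (m + n - k + 1),
        a1 ^ (m + n - k - i) * ((m + n - k).choose i : ℝ) * poch ((n : ℝ) + 1 - (i : ℝ)) (2 * i) *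
        ∑ j ∈ Finset.range (m + n - k - i + 1),
          (-1 : ℝ) ^ j * ((m + n - k - i).choose j : ℝ) *
            poch (-(n : ℝ) + (k : ℝ) + (j : ℝ) + (i : ℝ) + 1) (2 * (m + n - k - i - j)) *
            poch ((k : ℝ) + 2 - (j : ℝ)) (2 * j) * a2 ^ (j + i) := by
  have hβk : β k = besselLinCoeff n m a1 a2 k := by
    refine sub_eq_zero.1 (eq_zero_of_sum_mul_besselQ_eq_zero
      (D := fun i => β i - besselLinCoeff n m a1 a2 i) (fun u => ?_) (Nat.lt_succ_of_le hk))
    simp_rw [sub_mul, sum_sub_distrib, ← hβ, besselQ_mul_besselQ_eq_sum, sub_self]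
  rw [hβk, besselLinCoeff_eq_sum_besselLinTerm hk ha1 ha2, mul_sum]
  simp_rw [mul_sum]
  rfl
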